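/- arXiv:1811.11444 — 4 statements merged into one kernel-verified Lean document; each statement's English description precedes it below -/
import Mathlib

section
/- For all integers i ≥ 1 and n ≥ 1, the number of distinct squares occurring as factors of F[i;n] is strictly less than n. In other words, every factor of the Fibonacci word of length n contains fewer than n distinct square factors. -/
/-!
Every square `ww` occurring in the Fibonacci word `F` has a root `w` conjugate to a finite
Fibonacci word, so `|w| = fn k` for some `k`. This is proved by desubstitution: `F = σ(F)` is cut
into blocks `σ(a) = ab` and `σ(b) = a`, and every `a` starts a block. After rotating its root so
that it starts with `a`, an occurrence of a square of root length `q` (or merely of the factor of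
length `2q - 1` with period `q`) is the `σ`-image of such an occurrence with a shorter root. Since
conjugation commutes with `σ` and `σ(Fw k) = Fw (k + 1)`, induction on `q` concludes.

In a window of length `n`, take `K` largest with `2 fn K ≤ n + 1`. Square roots of length `fn k`
with `k < K` are among the `fn k` conjugates of `Fw k`, and those of length `fn K` are determined
by their offset in the window, of which there are `n + 1 - 2 fn K`. As
`∑_{k<K} fn k = fn (K + 1) - 2 ≤ 2 fn K - 2`, there are at most `n - 1` distinct squares.
-/

/-- Fibonacci numbers: `fn 0 = 1`, `fn 1 = 2`, `fn (m+2) = fn (m+1) + fn m`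
(so `fn m` is the paper's `f_m`; also `f_{m-1} = Nat.fib (m+1)` etc.). -/
def fn (m : ℕ) : ℕ := Nat.fib (m + 2)

/-- Finite Fibonacci words `Fw m = σ^m(a)` for the morphism σ(a)=ab, σ(b)=a,
with `a := false`, `b := true`; equivalently `Fw (m+2) = Fw (m+1) ++ Fw m`. -/
def Fw : ℕ → List Bool
  | 0 => [false]
  | 1 => [false, true]
  | m + 2 => Fw (m + 1) ++ Fw m

/-- The infinite Fibonacci word (0-indexed): the fixed point of σ beginning with `a`. -/
def fibWord (i : ℕ) : Bool := (Fw (i + 1)).getD i false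

/-- `fFactor i n = F[i;n]`, the factor of length `n` of the Fibonacci word
beginning at (1-indexed) position `i`. -/
def fFactor (i n : ℕ) : List Bool := (List.range n).map fun t => fibWord (i - 1 + t)

/-- `w` occurs as a factor of the infinite Fibonacci word. -/
def IsFactorF (w : List Bool) : Prop := ∃ i : ℕ, 1 ≤ i ∧ w = fFactor i w.length

/-- `D2 i n`: the number of distinct squares occurring as factors of `F[i;n]`. -/
noncomputable def D2 (i n : ℕ) : ℕ :=
  {w : List Bool | w ≠ [] ∧ (w ++ w) <:+: fFactor i n}.ncard

theorem List.IsRotated.flatMap {α β : Type*} {l l' : List α} (h : l ~r l') (f : α → List β) :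
    l.flatMap f ~r l'.flatMap f := by
  obtain ⟨n, hn, rfl⟩ := List.isRotated_iff_mod.1 h
  rw [List.rotate_eq_drop_append_take hn]
  conv_lhs => rw [← List.take_append_drop n l]
  simpa only [List.flatMap_append] using List.isRotated_append

theorem List.IsInfix.mem_image_take_drop {α : Type*} [DecidableEq α] {u v W : List α}
    (h : u ++ v <:+: W) :
    u ∈ (Finset.range (W.length + 1 - (u ++ v).length)).image
      fun o => (W.drop o).take u.length := by
  obtain ⟨s, t, rfl⟩ := h
  simp only [Finset.mem_image, Finset.mem_range]
  exact ⟨s.length, by simp only [List.length_append]; omega, by simp⟩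

namespace FibonacciWord

open List Finset

lemma fn_add_two (m : ℕ) : fn (m + 2) = fn (m + 1) + fn m := by
  rw [fn, fn, fn, Nat.fib_add_two]
  ring

lemma strictMono_fn : StrictMono fn := Nat.fib_add_two_strictMono

lemma le_fn (m : ℕ) : m ≤ fn m := strictMono_fn.id_le m

lemma fn_succ_le_two_mul (m : ℕ) : fn (m + 1) ≤ 2 * fn m := by
  show Nat.fib (m + 1 + 2) ≤ 2 * Nat.fib (m + 1 + 1)
  have : Nat.fib (m + 1) ≤ Nat.fib (m + 1 + 1) := Nat.fib_le_fib_succ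
  rw [Nat.fib_add_two]
  omega

lemma sum_range_fn (K : ℕ) : ∑ k ∈ Finset.range K, fn k + 2 = fn (K + 1) := by
  induction K with
  | zero => rfl
  | succ K ih => rw [Finset.sum_range_succ, fn_add_two]; omega

lemma length_Fw : ∀ m, (Fw m).length = fn m
  | 0 => rfl
  | 1 => rfl
  | m + 2 => by rw [Fw, length_append, length_Fw (m + 1), length_Fw m, fn_add_two]

lemma Fw_isPrefix_Fw {m M : ℕ} (h : m ≤ M) : Fw m <+: Fw M := by
  induction M, h using Nat.le_induction with
  | base => exact prefix_refl _
  | succ M _ ih =>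
    refine ih.trans ?_
    cases M with
    | zero => exact ⟨[true], rfl⟩
    | succ M => exact prefix_append _ _

lemma getElem_Fw {M t : ℕ} (h : t < (Fw M).length) : (Fw M)[t] = fibWord t := by
  have ht : t < (Fw (t + 1)).length := by
    rw [length_Fw]; exact le_fn (t + 1)
  rw [fibWord, getD_eq_getElem _ _ ht,
    (Fw_isPrefix_Fw (le_max_left M (t + 1))).getElem h,
    (Fw_isPrefix_Fw (le_max_right M (t + 1))).getElem ht]

def factor (a d : ℕ) : List Bool := (List.range d).map fun t => fibWord (a + t)

lemma fFactor_eq_factor (i n : ℕ) : fFactor i n = factor (i - 1) n := rfl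

@[simp] lemma length_factor (a d : ℕ) : (factor a d).length = d := by simp [factor]

@[simp] lemma getElem_factor {a d t : ℕ} (h : t < (factor a d).length) :
    (factor a d)[t] = fibWord (a + t) := by
  simp [factor]

lemma factor_add (a d e : ℕ) : factor a (d + e) = factor a d ++ factor (a + d) e := by
  simp [factor, List.range_add, Nat.add_assoc]

lemma factor_succ (a d : ℕ) : factor a (d + 1) = factor a d ++ [fibWord (a + d)] := by
  rw [factor_add]
  simp [factor]

lemma factor_succ' (a d : ℕ) : factor a (d + 1) = fibWord a :: factor (a + 1) d := by
  rw [Nat.add_comm, factor_add]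
  simp [factor]

lemma take_Fw {m M : ℕ} (h : m ≤ fn M) : (Fw M).take m = factor 0 m :=
  ext_getElem (by simp [length_Fw, h]) fun t h₁ h₂ => by simp [getElem_Fw]

lemma eq_factor_zero_of_isPrefix_Fw {l : List Bool} {M : ℕ} (h : l <+: Fw M) :
    l = factor 0 l.length := by
  rw [← take_Fw (by simpa [length_Fw] using h.length_le), ← prefix_iff_eq_take.1 h]

lemma exists_eq_factor_of_infix {u : List Bool} {a n : ℕ} (h : u <:+: factor a n) :
    ∃ j, u = factor j u.length := by
  obtain ⟨k, hk, hu⟩ := infix_iff_getElem?.1 h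
  refine ⟨a + k, ext_getElem (by simp) fun i h₁ h₂ => ?_⟩
  have := hu i h₁
  simp only [length_factor] at hk
  rw [getElem?_eq_getElem (by rw [length_factor]; omega), getElem_factor, Option.some_inj] at this
  rw [← this, getElem_factor]
  ring_nf

def morphism (l : List Bool) : List Bool := l.flatMap fun x => if x then [false] else [false, true]

lemma morphism_append (l l' : List Bool) : morphism (l ++ l') = morphism l ++ morphism l' :=
  flatMap_append ..

lemma morphism_singleton (x : Bool) : morphism [x] = if x then [false] else [false, true] := by
  simp [morphism]

lemma morphism_Fw : ∀ m, morphism (Fw m) = Fw (m + 1)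
  | 0 => rfl
  | 1 => rfl
  | m + 2 => by rw [Fw, morphism_append, morphism_Fw (m + 1), morphism_Fw m]; rfl

/-- Since `σ(F) = F`, the Fibonacci word is the concatenation of the blocks `σ(F m)`; the `m`-th
block starts at `blockStart m`. -/
def blockStart (m : ℕ) : ℕ := (morphism (factor 0 m)).length

lemma blockStart_zero : blockStart 0 = 0 := rfl

lemma morphism_factor_zero (m : ℕ) : morphism (factor 0 m) = factor 0 (blockStart m) := by
  obtain ⟨t, ht⟩ : factor 0 m <+: Fw m := by
    rw [← take_Fw (le_fn m)]
    exact take_prefix _ _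
  refine eq_factor_zero_of_isPrefix_Fw (M := m + 1) ⟨morphism t, ?_⟩
  rw [← morphism_append, ht, morphism_Fw]

lemma blockStart_add (m d : ℕ) :
    blockStart (m + d) = blockStart m + (morphism (factor m d)).length := by
  simp only [blockStart, factor_add, morphism_append, length_append, Nat.zero_add]

lemma morphism_factor (m d : ℕ) :
    morphism (factor m d) = factor (blockStart m) (morphism (factor m d)).length := by
  have h := morphism_factor_zero (m + d)
  rw [blockStart_add, factor_add, factor_add, morphism_append, morphism_factor_zero,
    Nat.zero_add, Nat.zero_add] at h
  exact append_cancel_left h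

lemma factor_one (a : ℕ) : factor a 1 = [fibWord a] := rfl

lemma blockStart_succ (m : ℕ) :
    blockStart (m + 1) = blockStart m + if fibWord m then 1 else 2 := by
  rw [blockStart_add, factor_one, morphism_singleton]
  split <;> rfl

lemma strictMono_blockStart : StrictMono blockStart :=
  strictMono_nat_of_lt_succ fun m => by rw [blockStart_succ]; split <;> omega

lemma factor_two (a : ℕ) : factor a 2 = [fibWord a, fibWord (a + 1)] := rfl

lemma factor_blockStart (m : ℕ) :
    factor (blockStart m) (blockStart (m + 1) - blockStart m) =
      if fibWord m then [false] else [false, true] := by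
  rw [← morphism_singleton, ← factor_one, morphism_factor m 1, blockStart_add]
  congr 1
  omega

lemma fibWord_blockStart (m : ℕ) : fibWord (blockStart m) = false := by
  have h := factor_blockStart m
  rw [blockStart_succ] at h
  cases hm : fibWord m <;> simp_all [factor_one, factor_two]

lemma fibWord_blockStart_add_one (m : ℕ) : fibWord (blockStart m + 1) = !fibWord m := by
  have h := factor_blockStart m
  cases hm : fibWord m
  · simp_all [blockStart_succ, factor_two]
  · have : blockStart (m + 1) = blockStart m + 1 := by simp [blockStart_succ, hm]
    rw [← this, fibWord_blockStart, Bool.not_true]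

lemma exists_block (j : ℕ) : ∃ m, blockStart m ≤ j ∧ j < blockStart (m + 1) := by
  obtain ⟨m, h₁, h₂⟩ := strictMono_blockStart.exists_between_of_tendsto_atTop
    strictMono_blockStart.tendsto_atTop (x := j + 1) (by simp [blockStart_zero])
  exact ⟨m, by omega, by omega⟩

lemma exists_blockStart_eq_of_fibWord_eq_false {j : ℕ} (h : fibWord j = false) :
    ∃ m, blockStart m = j := by
  obtain ⟨m, h₁, h₂⟩ := exists_block j
  refine ⟨m, le_antisymm h₁ (not_lt.1 fun hlt => ?_)⟩
  have hj := fibWord_blockStart_add_one m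
  rw [blockStart_succ] at h₂
  cases hm : fibWord m <;> simp only [hm, if_true, if_false, Bool.false_eq_true] at h₂ hj
  · rw [show j = blockStart m + 1 by omega, hj] at h
    cases h
  · omega

lemma exists_of_fibWord_eq_true {j : ℕ} (h : fibWord j = true) :
    ∃ m, blockStart m + 1 = j ∧ blockStart (m + 1) = j + 1 := by
  obtain ⟨m, h₁, h₂⟩ := exists_block j
  have hne : blockStart m ≠ j := fun he => by rw [← he, fibWord_blockStart] at h; cases h
  have hj := fibWord_blockStart_add_one m
  refine ⟨m, ?_⟩
  rw [blockStart_succ] at h₂ ⊢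
  cases hm : fibWord m <;>
    simp only [hm, if_true, if_false, Bool.false_eq_true] at h₂ hj ⊢ <;> omega

lemma fibWord_add_one_of_fibWord_eq_true {j : ℕ} (h : fibWord j = true) :
    fibWord (j + 1) = false := by
  obtain ⟨m, -, hm⟩ := exists_of_fibWord_eq_true h
  rw [← hm, fibWord_blockStart]

lemma blockStart_add_three_le (m : ℕ) : blockStart m + 3 ≤ blockStart (m + 2) := by
  have h₁ := blockStart_succ m
  have h₂ : blockStart (m + 2) = _ := blockStart_succ (m + 1)
  cases hm : fibWord m
  · have : blockStart (m + 1) < blockStart (m + 2) := strictMono_blockStart (by omega)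
    simp only [hm, Bool.false_eq_true, if_false] at h₁
    omega
  · simp only [hm, fibWord_add_one_of_fibWord_eq_true hm, Bool.false_eq_true, if_true,
      if_false] at h₁ h₂
    omega

lemma blockStart_add_three_le_of_add_two_le {m s d : ℕ} (h : s + 2 ≤ d) :
    blockStart (m + s) + 3 ≤ blockStart (m + d) :=
  (blockStart_add_three_le (m + s)).trans (strictMono_blockStart.monotone (by omega))

/-- The factor of length `2q - 1` at position `j` has period `q`: a square of root length `q`
missing its last letter. Unlike squares, this shape survives desubstitution. -/
def NearSquareAt (j q : ℕ) : Prop := ∀ t, t + 2 ≤ q → fibWord (j + t) = fibWord (j + q + t)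

lemma nearSquareAt_of_factor_eq {j q : ℕ} (h : factor j q = factor (j + q) q) :
    NearSquareAt j q := fun t ht => by
  have := congrArg (fun l => l[t]?) h
  simpa [show t < q by omega] using this

namespace NearSquareAt

variable {j q : ℕ}

lemma exists_fibWord_eq_false (h : NearSquareAt j q) (hq : 2 ≤ q) :
    ∃ i, fibWord i = false ∧ NearSquareAt i q ∧ factor j q ~r factor i q := by
  cases hj : fibWord j
  · exact ⟨j, hj, h, IsRotated.refl _⟩
  obtain ⟨m, rfl, -⟩ := exists_of_fibWord_eq_true hj
  have hjq : fibWord (blockStart m + 1 + q) = true := by simpa [hj] using (h 0 (by omega)).symm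
  obtain ⟨m', hm', -⟩ := exists_of_fibWord_eq_true hjq
  refine ⟨blockStart m, fibWord_blockStart m, fun t ht => ?_, ?_⟩
  · rcases t with _ | t
    · rw [show blockStart m + q + 0 = blockStart m' by omega]
      simp only [Nat.add_zero, fibWord_blockStart]
    · rw [show blockStart m + (t + 1) = blockStart m + 1 + t by omega,
        show blockStart m + q + (t + 1) = blockStart m + 1 + q + t by omega]
      exact h t (by omega)
  · obtain ⟨d, rfl⟩ : ∃ d, q = d + 1 := ⟨q - 1, by omega⟩
    rw [factor_succ, factor_succ', show blockStart m + 1 + d = blockStart m' by omega]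
    simp only [fibWord_blockStart]
    exact isRotated_concat _ _

lemma fibWord_eq_of_blockStart_eq (h : NearSquareAt j q) {x y : ℕ} (hx : j ≤ blockStart x)
    (hxq : blockStart x + 3 ≤ j + q) (hy : blockStart y = blockStart x + q) :
    fibWord y = fibWord x := by
  have := h (blockStart x + 1 - j) (by omega)
  rw [show j + (blockStart x + 1 - j) = blockStart x + 1 by omega,
    show j + q + (blockStart x + 1 - j) = blockStart y + 1 by omega,
    fibWord_blockStart_add_one, fibWord_blockStart_add_one] at this
  exact (Bool.not_inj this).symm

lemma blockStart_add_eq {m q' : ℕ} (h : NearSquareAt (blockStart m) q)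
    (hq : blockStart (m + q') = blockStart m + q) :
    ∀ s < q', blockStart (m + q' + s) = blockStart (m + s) + q
  | 0, _ => hq
  | s + 1, hs => by
    have ih := blockStart_add_eq h hq s (by omega)
    have hF : fibWord (m + q' + s) = fibWord (m + s) :=
      h.fibWord_eq_of_blockStart_eq (strictMono_blockStart.monotone (by omega))
        (hq ▸ blockStart_add_three_le_of_add_two_le (by omega)) ih
    rw [← Nat.add_assoc, blockStart_succ, ← Nat.add_assoc, blockStart_succ, ih, hF]
    omega

lemma desubstitute (h : NearSquareAt j q) (hj : fibWord j = false) (hq : 2 ≤ q) :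
    ∃ m q', 0 < q' ∧ q' < q ∧ NearSquareAt m q' ∧ morphism (factor m q') = factor j q := by
  obtain ⟨m, rfl⟩ := exists_blockStart_eq_of_fibWord_eq_false hj
  have hjq : fibWord (blockStart m + q) = false := by simpa [hj] using (h 0 (by omega)).symm
  obtain ⟨m', hm'⟩ := exists_blockStart_eq_of_fibWord_eq_false hjq
  have hmm' : m < m' := strictMono_blockStart.lt_iff_lt.1 (by omega)
  obtain ⟨q', rfl⟩ : ∃ q', m' = m + q' := ⟨m' - m, by omega⟩
  have hlen : (morphism (factor m q')).length = q := by have := blockStart_add m q'; omega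
  have hq'0 : 0 < q' := by omega
  refine ⟨m, q', hq'0, ?_, fun t ht => ?_, by rw [morphism_factor, hlen]⟩
  · rcases (by omega : q' = 1 ∨ 2 ≤ q') with rfl | hq'
    · exact hq
    · have h₁ := blockStart_add_three_le m
      have h₂ := strictMono_blockStart.add_le_nat (q' - 2) (m + 2)
      rw [show q' - 2 + (m + 2) = m + q' by omega] at h₂
      omega
  · exact (h.fibWord_eq_of_blockStart_eq (strictMono_blockStart.monotone (by omega))
      (hm' ▸ blockStart_add_three_le_of_add_two_le ht)
      (h.blockStart_add_eq hm' t (by omega))).symm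

theorem exists_isRotated_Fw (h : NearSquareAt j q) (hq : 2 ≤ q) : ∃ k, factor j q ~r Fw k := by
  induction q using Nat.strong_induction_on generalizing j with
  | _ q ih =>
  obtain ⟨i, hi, hiq, hrot⟩ := h.exists_fibWord_eq_false hq
  obtain ⟨m, q', hq'0, hq'q, hm, hσ⟩ := hiq.desubstitute hi hq
  obtain ⟨k, hk⟩ : ∃ k, factor m q' ~r Fw k := by
    rcases (by omega : q' = 1 ∨ 2 ≤ q') with rfl | hq'
    · refine ⟨0, ?_⟩
      cases hm1 : fibWord m
      · rw [factor_one, hm1]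
        rfl
      · rw [factor_one, hm1, morphism_singleton, if_pos rfl] at hσ
        have := congrArg length hσ
        rw [length_factor, length_singleton] at this
        omega
    · exact ih q' hq'q hm hq'
  refine ⟨k + 1, hrot.trans ?_⟩
  rw [← hσ, ← morphism_Fw]
  exact hk.flatMap _

end NearSquareAt

lemma exists_isRotated_Fw_of_append_self_infix {w : List Bool} (hw : w ≠ []) {a n : ℕ}
    (h : w ++ w <:+: factor a n) : ∃ k, w ~r Fw k := by
  obtain ⟨j, hj⟩ := exists_eq_factor_of_infix h
  rw [length_append, factor_add] at hj
  obtain ⟨h₁, h₂⟩ := append_inj hj (by simp)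
  rcases (by have := length_pos_of_ne_nil hw; omega : w.length = 1 ∨ 2 ≤ w.length)
    with hw1 | hw2
  · refine ⟨0, ?_⟩
    rw [hw1, factor_one] at h₁ h₂
    have hj : fibWord j = false := by
      cases hc : fibWord j
      · rfl
      · have := fibWord_add_one_of_fibWord_eq_true hc
        simp_all
    rw [h₁, hj]
    rfl
  · rw [h₁]
    exact (nearSquareAt_of_factor_eq (h₁.symm.trans h₂)).exists_isRotated_Fw hw2

lemma Fw_ne_nil (k : ℕ) : Fw k ≠ [] :=
  ne_nil_of_length_pos (by rw [length_Fw]; exact Nat.fib_pos.2 (by omega))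

lemma D2_le_sum_range_fn (i : ℕ) {n K : ℕ} (hK : n < 2 * fn (K + 1)) :
    D2 i n ≤ ∑ k ∈ Finset.range K, fn k + (n + 1 - 2 * fn K) := by
  classical
  rw [D2, fFactor_eq_factor]
  set W := factor (i - 1) n
  have hsub : {w : List Bool | w ≠ [] ∧ w ++ w <:+: W} ⊆
      ↑(((Finset.range K).biUnion fun k => (Fw k).cyclicPermutations.toFinset) ∪
        (Finset.range (n + 1 - 2 * fn K)).image fun o => (W.drop o).take (fn K)) := by
    rintro w ⟨hw, hww⟩
    obtain ⟨k, hk⟩ := exists_isRotated_Fw_of_append_self_infix hw hww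
    have hlen : w.length = fn k := hk.perm.length_eq.trans (length_Fw k)
    have hkK : k ≤ K := by
      have := hww.length_le
      simp only [W, length_append, length_factor, hlen] at this
      exact Nat.lt_succ_iff.1 (strictMono_fn.lt_iff_lt.1 (show fn k < fn (K + 1) by omega))
    simp only [Finset.coe_union, Set.mem_union, Finset.mem_coe, Finset.mem_biUnion,
      Finset.mem_range, mem_toFinset, mem_cyclicPermutations_iff]
    rcases hkK.lt_or_eq with hk' | rfl
    · exact Or.inl ⟨k, hk', hk⟩
    · right
      simpa [W, hlen, two_mul] using hww.mem_image_take_drop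
  calc _ ≤ _ := Set.ncard_le_ncard hsub (Finset.finite_toSet _)
    _ = _ := Set.ncard_coe_finset _
    _ ≤ _ := (card_union_le _ _).trans <| add_le_add
        (card_biUnion_le.trans <| Finset.sum_le_sum fun k _ => (toFinset_card_le _).trans_eq <|
          (length_cyclicPermutations_of_ne_nil _ (Fw_ne_nil k)).trans (length_Fw k))
        (card_image_le.trans (card_range _).le)

end FibonacciWord

theorem distinct_squares_lt_length_general (i n : ℕ) (hn : 1 ≤ n) :
    D2 i n < n := by
  have hmono : StrictMono fun k => 2 * fn k := FibonacciWord.strictMono_fn.const_mul two_pos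
  obtain ⟨K, hK, hK₁⟩ := hmono.exists_between_of_tendsto_atTop hmono.tendsto_atTop
    (x := n + 2) (show 2 * 1 < n + 2 by omega)
  have hD := FibonacciWord.D2_le_sum_range_fn i (show n < 2 * fn (K + 1) by omega)
  have hsum := FibonacciWord.sum_range_fn K
  have hfn := FibonacciWord.fn_succ_le_two_mul K
  have hfn₁ : 2 ≤ fn (K + 1) := FibonacciWord.strictMono_fn.monotone (Nat.le_add_left 1 K)
  omega

/-- Every factor of the Fibonacci word of length `n` contains fewer than `n`
distinct square factors. -/
theorem distinct_squares_lt_length (i n : ℕ) (hi : 1 ≤ i) (hn : 1 ≤ n) :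
    D2 i n < n :=
  distinct_squares_lt_length_general i n hn
end

section
/- For every integer m ≥ 0 and every integer i with 2 ≤ i ≤ f_{m+1}, let w = K_{m+1}[i, f_{m+1}] · K_m · K_{m+1}[1, i−1], a word of length f_{m+2}. Then ww = K_{m+4}[i, 2f_{m+2}+i−1]; in particular, since every kernel word K_m is a factor of the Fibonacci word F, the square ww is a factor of F. -/
/-- The kernel word `K_m` (`m ≥ 0`): the last letter of `F_{m+1}` followed by
`F_m` with its last letter removed. -/
def kerW (m : ℕ) : List Bool := (Fw (m + 1)).getLast! :: (Fw m).dropLast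

/-- `sliceF u i j = u[i,j]`, the (1-indexed) factor of `u` from position `i` to `j`,
with `u[i,i-1] = ε`. -/
def sliceF (u : List Bool) (i j : ℕ) : List Bool := (u.drop (i - 1)).take (j + 1 - i)

open List

section ListLemmas

variable {α : Type*}

lemma List.dropLast_append_getLast! [Inhabited α] {l : List α} (h : l ≠ []) :
    l.dropLast ++ [l.getLast!] = l := by
  rw [getLast!_of_getLast? (getLast?_eq_some_getLast h), dropLast_append_getLast]

lemma List.dropLast_dropLast_append (l₁ : List α) {l₂ : List α} (h : 2 ≤ l₂.length) :
    (l₁ ++ l₂).dropLast.dropLast = l₁ ++ l₂.dropLast.dropLast := by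
  have h₂ : l₂ ≠ [] := ne_nil_of_length_pos (by omega)
  have h₂' : l₂.dropLast ≠ [] := ne_nil_of_length_pos (by rw [length_dropLast]; omega)
  rw [dropLast_append_of_ne_nil h₂, dropLast_append_of_ne_nil h₂']

lemma List.conj_sq_eq_take_drop (u v : List α) {k : ℕ} (hk : k ≤ u.length) :
    (u.drop k ++ v ++ u.take k) ++ (u.drop k ++ v ++ u.take k)
      = ((u ++ v ++ u ++ v ++ u).drop k).take (2 * (u.length + v.length)) := by
  have hsplit : (u ++ v ++ u ++ v ++ u).drop k
      = (u.drop k ++ v ++ u.take k) ++ (u.drop k ++ v ++ u.take k) ++ u.drop k := by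
    rw [append_assoc, append_assoc, append_assoc, drop_append_of_le_length hk]
    have hu : ∀ x, u.take k ++ (u.drop k ++ x) = u ++ x := fun x => by
      rw [← append_assoc, take_append_drop]
    simp only [append_assoc, hu, take_append_drop]
  rw [hsplit, take_left']
  simp only [length_append, length_drop, length_take]
  omega

lemma List.take_drop_succ_eq_take_drop_tail_dropLast (l : List α) {k n : ℕ}
    (h : k + n + 1 < l.length) :
    (l.drop (k + 1)).take n = (l.tail.dropLast.drop k).take n := by
  rw [dropLast_eq_take, drop_take, take_take, drop_tail, length_tail,
    min_eq_left (by omega)]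

end ListLemmas

lemma fn_add_two (m : ℕ) : fn (m + 2) = fn (m + 1) + fn m := by
  rw [fn, fn, fn, Nat.fib_add_two, add_comm]

lemma succ_le_fn (m : ℕ) : m + 1 ≤ fn m := by
  have := Nat.le_fib_add_one (m + 2)
  rw [fn]; omega

lemma Fw_add_two (m : ℕ) : Fw (m + 2) = Fw (m + 1) ++ Fw m := rfl

lemma length_Fw : ∀ m, (Fw m).length = fn m
  | 0 => rfl
  | 1 => rfl
  | m + 2 => by rw [Fw_add_two, length_append, length_Fw (m + 1), length_Fw m, fn_add_two]

lemma Fw_ne_nil (m : ℕ) : Fw m ≠ [] :=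
  ne_nil_of_length_pos (by rw [length_Fw]; have := succ_le_fn m; omega)

lemma length_kerW (m : ℕ) : (kerW m).length = fn m := by
  have := succ_le_fn m
  simp only [kerW, length_cons, length_dropLast, length_Fw]
  omega

lemma Fw_isPrefix_Fw {a b : ℕ} (h : a ≤ b) : Fw a <+: Fw b := by
  induction b, h using Nat.le_induction with
  | base => exact prefix_refl _
  | succ b _ ih =>
    refine ih.trans ?_
    cases b with
    | zero => exact ⟨[true], rfl⟩
    | succ b => exact prefix_append _ _

lemma fibWord_eq_getElem {N t : ℕ} (ht : t < (Fw N).length) : fibWord t = (Fw N)[t] := by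
  have ht' : t < (Fw (t + 1)).length := by rw [length_Fw]; have := succ_le_fn (t + 1); omega
  rw [fibWord, getD_eq_getElem _ _ ht']
  rcases le_total (t + 1) N with h | h
  · exact (Fw_isPrefix_Fw h).getElem ht'
  · exact ((Fw_isPrefix_Fw h).getElem ht).symm

lemma fFactor_eq_take_drop_Fw {N i n : ℕ} (h : i - 1 + n ≤ (Fw N).length) :
    fFactor i n = ((Fw N).drop (i - 1)).take n := by
  refine ext_getElem (by simp [fFactor]; omega) fun t ht _ => ?_
  have htn : t < n := by simpa [fFactor] using ht
  simp only [fFactor, getElem_map, getElem_range, getElem_take, getElem_drop]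
  exact fibWord_eq_getElem (by omega)

lemma Fw_append_dropLast_dropLast_comm : ∀ m : ℕ,
    Fw (m + 1) ++ (Fw (m + 2)).dropLast.dropLast = Fw (m + 2) ++ (Fw (m + 1)).dropLast.dropLast
  | 0 => rfl
  | m + 1 => by
    have h2 : 2 ≤ (Fw (m + 1)).length := by rw [length_Fw]; have := succ_le_fn (m + 1); omega
    rw [Fw_add_two (m + 1), dropLast_dropLast_append _ h2, append_assoc,
      Fw_append_dropLast_dropLast_comm m]

lemma dropLast_Fw_append_kerW (m : ℕ) :
    (Fw (m + 1)).dropLast ++ kerW m = (Fw (m + 2)).dropLast := by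
  rw [Fw_add_two, dropLast_append_of_ne_nil (Fw_ne_nil m), kerW, ← singleton_append,
    ← append_assoc, dropLast_append_getLast! (Fw_ne_nil _)]

lemma kerW_eq_take_drop_Fw (m : ℕ) :
    kerW m = ((Fw (m + 2)).drop (fn (m + 1) - 1)).take (fn m) := by
  have h := dropLast_append_getLast! (Fw_ne_nil (m + 2))
  rw [← dropLast_Fw_append_kerW, append_assoc] at h
  conv_rhs => rw [← h]
  rw [drop_left' (by rw [length_dropLast, length_Fw]), take_left' (length_kerW m)]

lemma isFactorF_take_drop_kerW (m : ℕ) {k n : ℕ} (h : k + n ≤ fn m) :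
    IsFactorF (((kerW m).drop k).take n) := by
  have := succ_le_fn (m + 1)
  have hlen : (((kerW m).drop k).take n).length = n := by
    simp only [length_take, length_drop, length_kerW]; omega
  refine ⟨fn (m + 1) + k, by omega, ?_⟩
  rw [hlen, fFactor_eq_take_drop_Fw (N := m + 2) (by rw [length_Fw, fn_add_two]; omega),
    kerW_eq_take_drop_Fw, drop_take, take_take, drop_drop, min_eq_left (by omega)]
  congr 2
  omega

lemma tail_kerW (m : ℕ) : (kerW m).tail = (Fw m).dropLast := rfl

lemma dropLast_Fw_add_three (m : ℕ) :
    (Fw (m + 3)).dropLast = Fw (m + 2) ++ (Fw (m + 1)).dropLast := by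
  rw [Fw_add_two (m + 1), dropLast_append_of_ne_nil (Fw_ne_nil _)]

lemma tail_kerW_five (m : ℕ) :
    (kerW (m + 1) ++ kerW m ++ kerW (m + 1) ++ kerW m ++ kerW (m + 1)).tail
      = Fw (m + 2) ++ (Fw (m + 3)).dropLast := by
  calc (kerW (m + 1) ++ kerW m ++ kerW (m + 1) ++ kerW m ++ kerW (m + 1)).tail
      = (Fw (m + 1)).dropLast ++ kerW m ++ kerW (m + 1) ++ kerW m ++ kerW (m + 1) := rfl
    _ = (Fw (m + 3)).dropLast ++ kerW m ++ kerW (m + 1) := by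
      rw [dropLast_Fw_append_kerW, dropLast_Fw_append_kerW]
    _ = Fw (m + 2) ++ (Fw (m + 3)).dropLast := by
      nth_rw 1 [dropLast_Fw_add_three]
      rw [append_assoc, append_assoc, ← append_assoc _ (kerW m),
        dropLast_Fw_append_kerW, dropLast_Fw_append_kerW]

lemma tail_dropLast_kerW_five (m : ℕ) :
    (kerW (m + 1) ++ kerW m ++ kerW (m + 1) ++ kerW m ++ kerW (m + 1)).tail.dropLast
      = (kerW (m + 4)).tail.dropLast := by
  have h2 : 2 ≤ (Fw (m + 2)).length := by rw [length_Fw]; have := succ_le_fn (m + 2); omega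
  have h3 : (Fw (m + 3)).dropLast ≠ [] :=
    ne_nil_of_length_pos (by rw [length_dropLast, length_Fw]; have := succ_le_fn (m + 3); omega)
  rw [tail_kerW_five, dropLast_append_of_ne_nil h3, Fw_append_dropLast_dropLast_comm (m + 1),
    tail_kerW, Fw_add_two (m + 2), dropLast_dropLast_append _ h2]

lemma sliceF_add_one (u : List Bool) (k j : ℕ) :
    sliceF u (k + 1) j = (u.drop k).take (j - k) := by
  rw [sliceF, Nat.add_sub_cancel, Nat.add_sub_add_right]

/-- Case 1 squares: for `m ≥ 0` and `2 ≤ i ≤ f_{m+1}`, the word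
`w = K_{m+1}[i,f_{m+1}] · K_m · K_{m+1}[1,i-1]` has length `f_{m+2}`, and
`ww = K_{m+4}[i, 2f_{m+2}+i-1]`; in particular `ww` is a factor of `F`. -/
theorem square_case_one (m i : ℕ) (h2 : 2 ≤ i) (hi : i ≤ fn (m + 1))
    (w : List Bool)
    (hw : w = sliceF (kerW (m + 1)) i (fn (m + 1)) ++ kerW m ++ sliceF (kerW (m + 1)) 1 (i - 1)) :
    w.length = fn (m + 2) ∧
    w ++ w = sliceF (kerW (m + 4)) i (2 * fn (m + 2) + i - 1) ∧
    IsFactorF (w ++ w) := by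
  obtain ⟨k, rfl⟩ : ∃ k, i = k + 2 := ⟨i - 2, by omega⟩
  have hu := length_kerW (m + 1)
  have hv := length_kerW m
  have hf := fn_add_two m
  have hf3 : fn (m + 3) = fn (m + 2) + fn (m + 1) := fn_add_two (m + 1)
  have hf4 : fn (m + 4) = fn (m + 3) + fn (m + 2) := fn_add_two (m + 2)
  have hw' : w = (kerW (m + 1)).drop (k + 1) ++ kerW m ++ (kerW (m + 1)).take (k + 1) := by
    rw [hw, sliceF_add_one, sliceF_add_one, take_of_length_le (by rw [length_drop]; omega),
      drop_zero]
    rfl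
  have hww : w ++ w = ((kerW (m + 4)).drop (k + 1)).take (2 * fn (m + 2)) := by
    rw [hw', conj_sq_eq_take_drop _ _ (by omega), hu, hv, ← hf,
      take_drop_succ_eq_take_drop_tail_dropLast _ (by simp only [length_append]; omega),
      tail_dropLast_kerW_five,
      ← take_drop_succ_eq_take_drop_tail_dropLast _ (by rw [length_kerW]; omega)]
  refine ⟨by rw [hw']; simp only [length_append, length_drop, length_take]; omega, ?_, ?_⟩
  · rw [hww, sliceF_add_one]
    congr 1
    omega
  · rw [hww]
    exact isFactorF_take_drop_kerW (m + 4) (by omega)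
end

section
/- Let m ≥ 0 and let R_a, R_b be nonempty words over an alphabet A with |R_a| = f_m and |R_b| = f_{m−1}. Let h ≥ 0 and set M = h if h ≥ m+2; M = m+2 if h = m+1; M = m+1 if 1 ≤ h ≤ m; and M = m if h = 0. Let Θ be the infinite sequence whose i-th term (i ≥ 1) is the length-f_h window F(R_a,R_b)[i; f_h]. Then Θ is the Fibonacci word over the two blocks U and V, i.e., Θ = F(U,V), where U = (Θ_1, …, Θ_{f_M}) is the block of the first f_M terms of Θ and V = (Θ_{f_M+1}, …, Θ_{f_{M+1}}) is the block of the next f_{M−1} terms. -/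
/-- The first `N` blocks of `F(R_a,R_b)`: the Fibonacci word with each letter `a`
replaced by the block `R_a` and each `b` by `R_b`. -/
def substBlocks {α : Type*} (Ra Rb : List α) (N : ℕ) : List α :=
  ((List.range N).map fun t => if fibWord t = false then Ra else Rb).flatten

/-- The `i`-th letter (0-indexed) of the infinite word `F(R_a,R_b)`,
with default `d` (irrelevant when `R_a`, `R_b` are nonempty). -/
def substLetter {α : Type*} (Ra Rb : List α) (d : α) (i : ℕ) : α :=
  (substBlocks Ra Rb (i + 1)).getD i d


-- L1
lemma Fw_length : ∀ n, (Fw n).length = Nat.fib (n + 2)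
  | 0 => rfl
  | 1 => rfl
  | n + 2 => by
    rw [Fw, List.length_append, Fw_length (n+1), Fw_length n]
    show Nat.fib (n+3) + Nat.fib (n+2) = Nat.fib (n+4)
    have e1 : Nat.fib (n+4) = Nat.fib (n+2) + Nat.fib (n+3) := Nat.fib_add_two
    omega

-- L2
lemma lt_fib (n : ℕ) : n + 1 ≤ Nat.fib (n + 2) := by
  induction n with
  | zero => simp
  | succ k ih =>
    have h1 : 1 ≤ Nat.fib (k + 1) := Nat.fib_pos.2 (by omega)
    rw [show k+1+2 = (k+2)+1 by ring, Nat.fib_add_one (by omega)]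
    simp only [show k+2-1 = k+1 from rfl]
    omega

-- L3
lemma Fw_prefix (n : ℕ) : Fw n <+: Fw (n + 1) := by
  cases n with
  | zero => exact ⟨[true], rfl⟩
  | succ k => exact ⟨Fw k, rfl⟩

lemma Fw_prefix_le {n n' : ℕ} (h : n ≤ n') : Fw n <+: Fw n' := by
  induction n', h using Nat.le_induction with
  | base => exact List.prefix_rfl
  | succ k hk ih => exact ih.trans (Fw_prefix k)

-- L4
lemma getD_of_prefix {α : Type*} {l l' : List α} (h : l <+: l') {i : ℕ} (hi : i < l.length)
    (d : α) : l'.getD i d = l.getD i d := by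
  rw [List.getD_eq_getElem l d hi, List.getD_eq_getElem l' d (hi.trans_le h.length_le),
    List.IsPrefix.getElem h]

-- L5
lemma fibWord_eq_Fw {n t : ℕ} (ht : t < Nat.fib (n + 2)) :
    (Fw n).getD t false = fibWord t := by
  rcases le_total n (t + 1) with hle | hle
  · exact (getD_of_prefix (Fw_prefix_le hle) (by rw [Fw_length]; exact ht) false).symm
  · exact getD_of_prefix (Fw_prefix_le hle) (by rw [Fw_length]; have h1 := lt_fib t; have h2 := Nat.fib_mono (show t+2 ≤ t+1+2 by omega); omega) false

-- L6
lemma fibWord_zero : fibWord 0 = false := rfl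
lemma fibWord_one : fibWord 1 = true := rfl
lemma fibWord_two : fibWord 2 = false := rfl

-- head of Fw is false
lemma Fw_head : ∀ n, (Fw n).getD 0 false = false
  | 0 => rfl
  | 1 => rfl
  | n + 2 => by
    rw [Fw, List.getD_append]
    · exact Fw_head (n + 1)
    · rw [Fw_length]; exact Nat.fib_pos.2 (by omega)

-- after b comes a, at the list level
lemma afterB_list : ∀ n, ∀ t, t + 1 < (Fw n).length →
    (Fw n).getD t false = true → (Fw n).getD (t + 1) false = false
  | 0 => by intro t ht; simp [Fw] at ht
  | 1 => by
    intro t ht hb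
    have hl : (Fw 1).length = 2 := rfl
    have : t = 0 := by omega
    subst this
    exact absurd hb (by decide)
  | n + 2 => by
    intro t ht hb
    rw [Fw, List.length_append] at ht
    rcases lt_trichotomy (t + 1) (Fw (n + 1)).length with h1 | h1 | h1
    · rw [Fw, List.getD_append _ _ _ _ (by exact h1)]
      rw [Fw, List.getD_append _ _ _ _ (by omega)] at hb
      exact afterB_list (n + 1) t (by omega) hb
    · rw [Fw, List.getD_append_right _ _ _ _ (by omega), h1, Nat.sub_self]
      exact Fw_head n
    · rw [Fw, List.getD_append_right _ _ _ _ (by omega)] at hb ⊢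
      have heq : t + 1 - (Fw (n + 1)).length = (t - (Fw (n + 1)).length) + 1 := by omega
      rw [heq]
      exact afterB_list n _ (by omega) hb

-- after b comes a, for the infinite word
lemma afterB {t : ℕ} (hb : fibWord t = true) : fibWord (t + 1) = false := by
  have hlen : t + 1 + 1 ≤ Nat.fib (t + 1 + 2) := lt_fib (t + 1)
  have h1 : (Fw (t + 1)).getD t false = fibWord t :=
    fibWord_eq_Fw (by have := lt_fib t; have := Nat.fib_mono (show t + 2 ≤ t + 3 by omega); omega)
  have h2 : (Fw (t + 1)).getD (t + 1) false = fibWord (t + 1) :=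
    fibWord_eq_Fw (by omega)
  rw [← h2]
  exact afterB_list (t + 1) t (by rw [Fw_length]; omega) (h1.trans hb)

-- sigma expansion
def sexp (l : List Bool) : List Bool :=
  (l.map fun b => if b = false then [false, true] else [false]).flatten

lemma sexp_append (l l' : List Bool) : sexp (l ++ l') = sexp l ++ sexp l' := by
  simp [sexp]

lemma Fw_succ_eq_sexp : ∀ n, Fw (n + 1) = sexp (Fw n)
  | 0 => rfl
  | 1 => rfl
  | n + 2 => by
    show Fw (n + 2) ++ Fw (n + 1) = sexp (Fw (n + 2))
    rw [show Fw (n + 2) = Fw (n + 1) ++ Fw n from rfl, sexp_append,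
      ← Fw_succ_eq_sexp (n + 1), ← Fw_succ_eq_sexp n]
    rw [show Fw (n + 1 + 1) = Fw (n + 1) ++ Fw n from rfl]

-- blowup
def blowup {α : Type*} (X Y : List α) (l : List Bool) : List α :=
  (l.map fun b => if b = false then X else Y).flatten

lemma blowup_append {α : Type*} (X Y : List α) (l l' : List Bool) :
    blowup X Y (l ++ l') = blowup X Y l ++ blowup X Y l' := by
  simp [blowup]

lemma blowup_sexp {α : Type*} (X Y : List α) (l : List Bool) :
    blowup X Y (sexp l) = blowup (X ++ Y) X l := by
  induction l with
  | nil => rfl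
  | cons b l ih =>
    have : sexp (b :: l) = (if b = false then [false, true] else [false]) ++ sexp l := by
      simp [sexp]
    rw [this, blowup_append, ih]
    cases b <;> simp [blowup]

lemma substBlocks_eq_blowup {α : Type*} (X Y : List α) (N : ℕ) :
    substBlocks X Y N = blowup X Y ((List.range N).map fibWord) := by
  simp only [substBlocks, blowup, List.map_map]; rfl

lemma range_map_fibWord (n : ℕ) : (List.range (Nat.fib (n + 2))).map fibWord = Fw n := by
  apply List.ext_getElem
  · simp [Fw_length]
  · intro i h1 h2
    simp only [List.getElem_map, List.getElem_range]
    rw [← List.getD_eq_getElem (Fw n) false h2, fibWord_eq_Fw (by rwa [Fw_length] at h2)]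

-- one morphism step at Fibonacci prefix lengths
lemma substBlocks_step {α : Type*} (X Y : List α) (n : ℕ) :
    substBlocks X Y (Nat.fib (n + 3)) = substBlocks (X ++ Y) X (Nat.fib (n + 2)) := by
  rw [substBlocks_eq_blowup, substBlocks_eq_blowup,
    show n + 3 = (n + 1) + 2 from rfl, range_map_fibWord, range_map_fibWord,
    Fw_succ_eq_sexp, blowup_sexp]

lemma substBlocks_succ {α : Type*} (X Y : List α) (N : ℕ) :
    substBlocks X Y (N + 1) = substBlocks X Y N ++ (if fibWord N = false then X else Y) := by
  simp [substBlocks, List.range_succ]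

lemma substBlocks_length_ge {α : Type*} {X Y : List α} (hX : X ≠ []) (hY : Y ≠ [])
    (N : ℕ) : N ≤ (substBlocks X Y N).length := by
  induction N with
  | zero => simp
  | succ k ih =>
    rw [substBlocks_succ, List.length_append]
    have : 0 < (if fibWord k = false then X else Y).length := by
      split <;> simp [List.length_pos_iff, hX, hY]
    omega

lemma substBlocks_prefix {α : Type*} (X Y : List α) {N N' : ℕ} (h : N ≤ N') :
    substBlocks X Y N <+: substBlocks X Y N' := by
  induction N', h using Nat.le_induction with
  | base => exact List.prefix_rfl
  | succ k hk ih =>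
    refine ih.trans ?_
    rw [substBlocks_succ]
    exact List.prefix_append _ _

lemma substLetter_eq_getD {α : Type*} {X Y : List α} (hX : X ≠ []) (hY : Y ≠ [])
    (d : α) {p N : ℕ} (hp : p < (substBlocks X Y N).length) :
    substLetter X Y d p = (substBlocks X Y N).getD p d := by
  unfold substLetter
  rcases le_total N (p + 1) with hle | hle
  · exact getD_of_prefix (substBlocks_prefix X Y hle) hp d
  · exact (getD_of_prefix (substBlocks_prefix X Y hle)
      (lt_of_lt_of_le (Nat.lt_succ_self p) (substBlocks_length_ge hX hY (p + 1))) d).symm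

/-- Reading a letter inside block `t`. -/
lemma blockRead {α : Type*} {X Y : List α} (hX : X ≠ []) (hY : Y ≠ []) (d : α)
    {t x : ℕ} (hx : x < (if fibWord t = false then X else Y).length) :
    substLetter X Y d ((substBlocks X Y t).length + x)
      = (if fibWord t = false then X else Y).getD x d := by
  have hlt : (substBlocks X Y t).length + x < (substBlocks X Y (t + 1)).length := by
    rw [substBlocks_succ, List.length_append]; omega
  rw [substLetter_eq_getD hX hY d hlt, substBlocks_succ,
    List.getD_append_right _ _ _ _ (by omega)]
  congr 1
  omega

/-- Tower of blocks: `ABt Ra Rb j = (A_j, B_j)` with `A_{j+1} = A_j ++ B_j`, `B_{j+1} = A_j`. -/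
def ABt {α : Type*} (Ra Rb : List α) : ℕ → List α × List α
  | 0 => (Ra, Rb)
  | j + 1 => ((ABt Ra Rb j).1 ++ (ABt Ra Rb j).2, (ABt Ra Rb j).1)

section Tower
variable {α : Type*} {Ra Rb : List α} {m : ℕ} (d : α)

lemma ABt_len (hRa : Ra.length = Nat.fib (m + 2)) (hRb : Rb.length = Nat.fib (m + 1)) :
    ∀ j, ((ABt Ra Rb j).1.length = Nat.fib (m + j + 2)) ∧
      ((ABt Ra Rb j).2.length = Nat.fib (m + j + 1)) := by
  intro j
  induction j with
  | zero => exact ⟨hRa, hRb⟩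
  | succ k ih =>
    constructor
    · show ((ABt Ra Rb k).1 ++ (ABt Ra Rb k).2).length = _
      rw [List.length_append, ih.1, ih.2]
      have : Nat.fib (m + (k+1) + 2) = Nat.fib (m + k + 1) + Nat.fib (m + k + 2) := by
        rw [show m + (k+1) + 2 = (m + k + 1) + 2 by ring, Nat.fib_add_two]
      omega
    · show (ABt Ra Rb k).1.length = _
      rw [ih.1]
      congr 1

lemma ABt_ne (hRa : Ra.length = Nat.fib (m + 2)) (hRb : Rb.length = Nat.fib (m + 1)) (j : ℕ) :
    (ABt Ra Rb j).1 ≠ [] ∧ (ABt Ra Rb j).2 ≠ [] := by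
  have h := ABt_len hRa hRb j
  have p1 : 0 < Nat.fib (m + j + 2) := Nat.fib_pos.2 (by omega)
  have p2 : 0 < Nat.fib (m + j + 1) := Nat.fib_pos.2 (by omega)
  constructor
  · intro hc; rw [← List.length_eq_zero_iff] at hc; omega
  · intro hc; rw [← List.length_eq_zero_iff] at hc; omega

lemma substBlocks_level : ∀ j n, substBlocks Ra Rb (Nat.fib (n + 2 + j))
    = substBlocks (ABt Ra Rb j).1 (ABt Ra Rb j).2 (Nat.fib (n + 2)) := by
  intro j
  induction j with
  | zero => intro n; rfl
  | succ k ih =>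
    intro n
    have h1 : n + 2 + (k + 1) = (n + 1) + 2 + k := by ring
    rw [h1, ih (n + 1), show n + 1 + 2 = n + 3 from rfl, substBlocks_step]
    rfl

lemma substLetter_level (hRa : Ra.length = Nat.fib (m + 2)) (hRb : Rb.length = Nat.fib (m + 1))
    (j p : ℕ) : substLetter Ra Rb d p = substLetter (ABt Ra Rb j).1 (ABt Ra Rb j).2 d p := by
  have hRane : Ra ≠ [] := (ABt_ne hRa hRb 0).1
  have hRbne : Rb ≠ [] := (ABt_ne hRa hRb 0).2
  have hAne := (ABt_ne hRa hRb j).1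
  have hBne := (ABt_ne hRa hRb j).2
  have hp : p < (substBlocks (ABt Ra Rb j).1 (ABt Ra Rb j).2 (Nat.fib (p + 2))).length := by
    have h1 := substBlocks_length_ge hAne hBne (Nat.fib (p + 2))
    have h2 := lt_fib p
    omega
  have hp2 : p < (substBlocks Ra Rb (Nat.fib (p + 2 + j))).length := by
    rw [substBlocks_level j p]; exact hp
  rw [substLetter_eq_getD hRane hRbne d hp2, substLetter_eq_getD hAne hBne d hp,
    substBlocks_level j p]

lemma ABt_fst_prefix (j : ℕ) : (ABt Ra Rb j).1 <+: (ABt Ra Rb (j + 1)).1 :=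
  List.prefix_append _ _

lemma ABt_fst_prefix_le {j j' : ℕ} (h : j ≤ j') : (ABt Ra Rb j).1 <+: (ABt Ra Rb j').1 := by
  induction j', h using Nat.le_induction with
  | base => exact List.prefix_rfl
  | succ k hk ih => exact ih.trans (ABt_fst_prefix k)

lemma ABt_snd_prefix (j : ℕ) : (ABt Ra Rb (j + 1)).2 <+: (ABt Ra Rb (j + 1)).1 :=
  List.prefix_append _ _
end Tower

section Main
variable {α : Type*} {A B : List α} {M : ℕ} (d : α)

lemma readA (hA : A.length = Nat.fib (M + 2)) (hB : B.length = Nat.fib (M + 1))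
    {t x : ℕ} (ht : fibWord t = false) (hx : x < Nat.fib (M + 2)) :
    substLetter A B d ((substBlocks A B t).length + x) = A.getD x d := by
  have := blockRead (X := A) (Y := B)
    (by rw [← List.length_pos_iff, hA]; exact Nat.fib_pos.2 (by omega))
    (by rw [← List.length_pos_iff, hB]; exact Nat.fib_pos.2 (by omega)) d
    (t := t) (x := x) (by rw [ht]; simpa [hA] using hx)
  rwa [ht, if_pos rfl] at this

lemma readB (hA : A.length = Nat.fib (M + 2)) (hB : B.length = Nat.fib (M + 1))
    {t x : ℕ} (ht : fibWord t = true) (hx : x < Nat.fib (M + 1)) :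
    substLetter A B d ((substBlocks A B t).length + x) = B.getD x d := by
  have := blockRead (X := A) (Y := B)
    (by rw [← List.length_pos_iff, hA]; exact Nat.fib_pos.2 (by omega))
    (by rw [← List.length_pos_iff, hB]; exact Nat.fib_pos.2 (by omega)) d
    (t := t) (x := x) (by rw [ht]; simpa [hB] using hx)
  rwa [ht, if_neg (by simp)] at this

lemma Sstep (t : ℕ) : (substBlocks A B (t + 1)).length
    = (substBlocks A B t).length + (if fibWord t = false then A.length else B.length) := by
  rw [substBlocks_succ, List.length_append]
  split <;> simp_all

lemma S_zero : (substBlocks A B 0).length = 0 := rfl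

lemma S_one (hA : A.length = Nat.fib (M + 2)) :
    (substBlocks A B 1).length = Nat.fib (M + 2) := by
  rw [Sstep, S_zero, fibWord_zero, if_pos rfl, hA]; omega

lemma S_two (hA : A.length = Nat.fib (M + 2)) (hB : B.length = Nat.fib (M + 1)) :
    (substBlocks A B 2).length = Nat.fib (M + 2) + Nat.fib (M + 1) := by
  rw [Sstep, S_one hA, fibWord_one, if_neg (by simp), hB]

lemma mainA (hA : A.length = Nat.fib (M + 2)) (hB : B.length = Nat.fib (M + 1))
    {t x : ℕ} (ht : fibWord t = false) (hx : x < 2 * Nat.fib (M + 2))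
    (hBp : Nat.fib (M + 2) ≤ x → B <+: A)
    (hP : Nat.fib (M + 2) + Nat.fib (M + 1) ≤ x →
      ∀ z, z < Nat.fib M → A.getD (Nat.fib (M + 1) + z) d = A.getD z d) :
    substLetter A B d ((substBlocks A B t).length + x) = substLetter A B d x := by
  have hfib2 : Nat.fib (M + 2) = Nat.fib M + Nat.fib (M + 1) := Nat.fib_add_two
  rcases Nat.lt_or_ge x (Nat.fib (M + 2)) with hx1 | hx1
  · rw [readA d hA hB ht hx1]
    have := readA d hA hB (t := 0) fibWord_zero hx1
    rw [S_zero, Nat.zero_add] at this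
    rw [this]
  · set y := x - Nat.fib (M + 2) with hy
    have hxe : x = Nat.fib (M + 2) + y := by omega
    have hylt : y < Nat.fib (M + 2) := by omega
    have hS : (substBlocks A B t).length + x = (substBlocks A B (t + 1)).length + y := by
      rw [Sstep, ht, if_pos rfl, hA]; omega
    rcases Nat.lt_or_ge y (Nat.fib (M + 1)) with hy1 | hy1
    · -- RHS is B.getD y
      have hRHS : substLetter A B d x = B.getD y d := by
        have := readB d hA hB (t := 1) fibWord_one hy1
        rw [S_one hA] at this
        rw [hxe]; exact this
      rw [hRHS, hS]
      cases hft : fibWord (t + 1) with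
      | true => exact readB d hA hB hft hy1
      | false =>
        rw [readA d hA hB hft hylt]
        exact getD_of_prefix (hBp (by omega)) (by rw [hB]; exact hy1) d
    · -- RHS is A.getD z
      set z := y - Nat.fib (M + 1) with hz
      have hzlt : z < Nat.fib M := by omega
      have hRHS : substLetter A B d x = A.getD z d := by
        have := readA d hA hB (t := 2) fibWord_two (show z < Nat.fib (M + 2) by omega)
        rw [S_two hA hB] at this
        rw [show x = Nat.fib (M + 2) + Nat.fib (M + 1) + z by omega]
        exact this
      rw [hRHS, hS]
      cases hft : fibWord (t + 1) with
      | true =>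
        have hS2 : (substBlocks A B (t + 1)).length + y
            = (substBlocks A B (t + 2)).length + z := by
          conv_rhs => rw [show t + 2 = (t + 1) + 1 from rfl, Sstep]
          rw [hft, if_neg (by simp), hB]; omega
        rw [hS2]
        exact readA d hA hB (afterB hft) (by omega)
      | false =>
        rw [readA d hA hB hft hylt, show y = Nat.fib (M + 1) + z by omega]
        exact hP (by omega) z hzlt

lemma mainB (hA : A.length = Nat.fib (M + 2)) (hB : B.length = Nat.fib (M + 1))
    {t x : ℕ} (ht : fibWord t = true) (hx : x < Nat.fib (M + 1) + Nat.fib (M + 2)) :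
    substLetter A B d ((substBlocks A B t).length + x)
      = substLetter A B d (Nat.fib (M + 2) + x) := by
  rcases Nat.lt_or_ge x (Nat.fib (M + 1)) with hx1 | hx1
  · rw [readB d hA hB ht hx1]
    have := readB d hA hB (t := 1) fibWord_one hx1
    rw [S_one hA] at this
    rw [this]
  · set y := x - Nat.fib (M + 1) with hy
    have hylt : y < Nat.fib (M + 2) := by omega
    have hS : (substBlocks A B t).length + x = (substBlocks A B (t + 1)).length + y := by
      rw [Sstep, ht, if_neg (by simp), hB]; omega
    rw [hS, readA d hA hB (afterB ht) hylt]
    have := readA d hA hB (t := 2) fibWord_two hylt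
    rw [S_two hA hB] at this
    rw [show Nat.fib (M + 2) + x = Nat.fib (M + 2) + Nat.fib (M + 1) + y by omega]
    exact this.symm
end Main

lemma fn_def (x : ℕ) : fn x = Nat.fib (x + 2) := rfl


/-- The sequence `Θ` of length-`f_h` windows of `F(R_a,R_b)` (`|R_a| = f_m`,
`|R_b| = f_{m-1}`) is itself the Fibonacci word over the blocks `U = (Θ_1,…,Θ_{f_M})`
and `V = (Θ_{f_M+1},…,Θ_{f_{M+1}})`, where `M = h` if `h ≥ m+2`, `M = m+2` if
`h = m+1`, `M = m+1` if `1 ≤ h ≤ m`, and `M = m` if `h = 0`. -/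
theorem window_sequence_is_fibonacci_word {α : Type*} (m : ℕ) (Ra Rb : List α) (d : α)
    (hRa : Ra.length = fn m) (hRb : Rb.length = Nat.fib (m + 1))
    (h M : ℕ)
    (hM : M = if m + 2 ≤ h then h else if h = m + 1 then m + 2 else if h = 0 then m else m + 1)
    (Θ : ℕ → List α)
    (hΘ : ∀ i, 1 ≤ i → Θ i = (List.range (fn h)).map fun t => substLetter Ra Rb d (i - 1 + t))
    (U V : List (List α))
    (hU : U = (List.range (fn M)).map fun t => Θ (t + 1))
    (hV : V = (List.range (fn (M + 1) - fn M)).map fun t => Θ (fn M + t + 1)) :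
    ∀ i, 1 ≤ i → Θ i = substLetter U V ([] : List α) (i - 1) := by
  have hRa' : Ra.length = Nat.fib (m + 2) := hRa
  -- the level
  obtain ⟨k, hMk, hF1, hF2k, hF3k⟩ : ∃ k, M = m + k ∧
      (fn h ≤ Nat.fib (M + 2) + 1) ∧
      (2 ≤ fn h → 1 ≤ k) ∧
      (Nat.fib (M + 1) + 2 ≤ fn h → 2 ≤ k) := by
    refine ⟨M - m, ?_⟩
    split_ifs at hM with h1 h2 h3
    · -- h ≥ m + 2, M = h, k = h - m ≥ 2
      subst hM
      refine ⟨by omega, by rw [fn_def]; omega, fun _ => by omega, fun _ => by omega⟩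
    · -- h = m + 1, M = m + 2, k = 2
      subst hM h2
      refine ⟨by omega, ?_, fun _ => by omega, ?_⟩
      · rw [fn_def]
        have := Nat.fib_mono (show m + 1 + 2 ≤ m + 2 + 2 by omega)
        omega
      · rw [fn_def, show m + 2 + 1 = m + 1 + 2 from rfl]
        omega
    · -- h = 0, M = m, k = 0
      subst hM h3
      have hfn0 : fn 0 = 1 := rfl
      refine ⟨by omega, by rw [hfn0]; omega, by rw [hfn0]; omega, by rw [hfn0]; omega⟩
    · -- 1 ≤ h ≤ m, M = m + 1, k = 1
      subst hM
      have hhm : h ≤ m := by omega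
      have hmono : Nat.fib (h + 2) ≤ Nat.fib (m + 2) := Nat.fib_mono (by omega)
      refine ⟨by omega, ?_, fun _ => by omega, ?_⟩
      · rw [fn_def]
        have := Nat.fib_mono (show m + 2 ≤ m + 1 + 2 by omega)
        omega
      · rw [fn_def, show m + 1 + 1 = m + 2 from rfl]
        omega
  set A := (ABt Ra Rb k).1 with hAdef
  set B := (ABt Ra Rb k).2 with hBdef
  have hlen := ABt_len hRa' hRb k
  have hA : A.length = Nat.fib (M + 2) := by rw [← hAdef] at hlen; rw [hlen.1, hMk]
  have hB : B.length = Nat.fib (M + 1) := by rw [← hBdef] at hlen; rw [hlen.2, hMk]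
  have hAne : A ≠ [] := (ABt_ne hRa' hRb k).1
  have hBne : B ≠ [] := (ABt_ne hRa' hRb k).2
  -- F2 : B is a prefix of A when k ≥ 1
  have hF2 : 2 ≤ fn h → B <+: A := by
    intro hfh
    obtain ⟨k', hkk⟩ : ∃ k', k = k' + 1 := ⟨k - 1, by have := hF2k hfh; omega⟩
    rw [hAdef, hBdef, hkk]
    exact ABt_snd_prefix k'
  -- F3 : the overlap property when k ≥ 2
  have hF3 : Nat.fib (M + 1) + 2 ≤ fn h →
      ∀ z, z < Nat.fib M → A.getD (Nat.fib (M + 1) + z) d = A.getD z d := by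
    intro hfh z hz
    obtain ⟨j, hkj⟩ : ∃ j, k = j + 2 := ⟨k - 2, by have := hF3k hfh; omega⟩
    have hsplit : A = (ABt Ra Rb (j + 1)).1 ++ (ABt Ra Rb j).1 := by
      rw [hAdef, hkj]; rfl
    have hlen1 : (ABt Ra Rb (j + 1)).1.length = Nat.fib (M + 1) := by
      rw [(ABt_len hRa' hRb (j + 1)).1]; congr 1; omega
    have hlenj : (ABt Ra Rb j).1.length = Nat.fib M := by
      rw [(ABt_len hRa' hRb j).1]; congr 1; omega
    have hpre : (ABt Ra Rb j).1 <+: A := by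
      rw [hAdef, hkj]; exact ABt_fst_prefix_le (by omega)
    conv_lhs => rw [hsplit]
    rw [List.getD_append_right _ _ _ _ (by omega), hlen1, Nat.add_sub_cancel_left,
      getD_of_prefix hpre (by rw [hlenj]; exact hz) d]
  -- level transfer
  have hlev : ∀ p, substLetter Ra Rb d p = substLetter A B d p :=
    fun p => substLetter_level d hRa' hRb k p
  -- windows
  set win : ℕ → List α := fun j => (List.range (fn h)).map fun q => substLetter A B d (j + q)
    with hwin
  have hΘwin : ∀ j, Θ (j + 1) = win j := by
    intro j
    rw [hΘ (j + 1) (by omega), hwin]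
    simp only [Nat.add_sub_cancel]
    exact List.map_congr_left fun q _ => hlev (j + q)
  -- window equalities
  have hwinA : ∀ N r, fibWord N = false → r < Nat.fib (M + 2) →
      win ((substBlocks A B N).length + r) = win r := by
    intro N r hN hr
    apply List.map_congr_left
    intro q hq
    rw [List.mem_range] at hq
    rw [show (substBlocks A B N).length + r + q = (substBlocks A B N).length + (r + q) by omega]
    exact mainA d hA hB hN (by omega)
      (fun hge => hF2 (by omega)) (fun hge => hF3 (by omega))
  have hwinB : ∀ N r, fibWord N = true → r < Nat.fib (M + 1) →
      win ((substBlocks A B N).length + r) = win (Nat.fib (M + 2) + r) := by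
    intro N r hN hr
    apply List.map_congr_left
    intro q hq
    rw [List.mem_range] at hq
    rw [show (substBlocks A B N).length + r + q = (substBlocks A B N).length + (r + q) by omega,
      show Nat.fib (M + 2) + r + q = Nat.fib (M + 2) + (r + q) by omega]
    exact mainB d hA hB hN (by omega)
  -- the main induction
  have hVlen : fn (M + 1) - fn M = Nat.fib (M + 1) := by
    rw [fn_def, fn_def, show M + 1 + 2 = (M + 1) + 2 from rfl, Nat.fib_add_two,
      show M + 1 + 1 = M + 2 from rfl]
    omega
  have hmain : ∀ N, substBlocks U V N
      = (List.range ((substBlocks A B N).length)).map win := by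
    intro N
    induction N with
    | zero => rfl
    | succ N ih =>
      rw [substBlocks_succ, ih, Sstep, List.range_add, List.map_append, List.map_map]
      congr 1
      cases hN : fibWord N with
      | false =>
        rw [if_pos rfl, if_pos rfl, hA, hU]
        rw [show ((List.range (Nat.fib (M + 2))).map
          (win ∘ fun x => (substBlocks A B N).length + x))
          = (List.range (Nat.fib (M + 2))).map win from
          List.map_congr_left fun r hr => by
            have hr' := List.mem_range.1 hr
            exact hwinA N r hN hr']
        apply List.map_congr_left
        intro t ht
        have ht' := List.mem_range.1 ht
        rw [hΘwin t]
      | true =>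
        rw [if_neg (by simp), if_neg (by simp), hB, hV, hVlen]
        rw [show ((List.range (Nat.fib (M + 1))).map
          (win ∘ fun x => (substBlocks A B N).length + x))
          = (List.range (Nat.fib (M + 1))).map fun r => win (Nat.fib (M + 2) + r) from
          List.map_congr_left fun r hr => by
            have hr' := List.mem_range.1 hr
            exact hwinB N r hN hr']
        apply List.map_congr_left
        intro t ht
        rw [show fn M + t + 1 = (fn M + t) + 1 from rfl, hΘwin (fn M + t), fn_def]
  -- conclusion
  intro i hi
  have hUne : U ≠ [] := by
    rw [← List.length_pos_iff, hU, List.length_map, List.length_range, fn_def]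
    exact Nat.fib_pos.2 (by omega)
  have hVne : V ≠ [] := by
    rw [← List.length_pos_iff, hV, List.length_map, List.length_range, hVlen]
    exact Nat.fib_pos.2 (by omega)
  have hSi : i ≤ (substBlocks A B i).length := substBlocks_length_ge hAne hBne i
  have hUVi : i - 1 < (substBlocks U V i).length := by
    have := substBlocks_length_ge hUne hVne i
    omega
  rw [substLetter_eq_getD hUne hVne _ hUVi, hmain i,
    List.getD_eq_getElem _ _ (by simp only [List.length_map, List.length_range]; omega)]
  simp only [List.getElem_map, List.getElem_range]
  rw [← hΘwin (i - 1), show i - 1 + 1 = i by omega]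
end

section
/- No prefix of the Fibonacci word F is a cube: there is no nonempty word w such that www is a prefix of F, i.e., F[1; 3|w|] ≠ www for every nonempty word w. -/
def sigL (l : List Bool) : List Bool := l.flatMap (fun x => if x then [false] else [false, true])

lemma sigL_append (a b : List Bool) : sigL (a ++ b) = sigL a ++ sigL b :=
  List.flatMap_append ..

lemma sigL_cons (x : Bool) (xs : List Bool) :
    sigL (x :: xs) = (if x then [false] else [false, true]) ++ sigL xs :=
  List.flatMap_cons ..

lemma Fw_succ : ∀ m, Fw (m + 1) = sigL (Fw m)
  | 0 => rfl
  | 1 => rfl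
  | (m+2) => by
    show Fw (m+2) ++ Fw (m+1) = sigL (Fw (m+1) ++ Fw m)
    rw [sigL_append, ← Fw_succ (m+1), ← Fw_succ m]

lemma Fw_len : ∀ m, m + 1 ≤ (Fw m).length
  | 0 => by simp [Fw]
  | 1 => by simp [Fw]
  | (m+2) => by
    have h1 := Fw_len (m+1)
    have h2 := Fw_len m
    show m + 3 ≤ (Fw (m+1) ++ Fw m).length
    rw [List.length_append]; omega

lemma Fw_prefix_succ : ∀ m, Fw m <+: Fw (m + 1)
  | 0 => ⟨[true], rfl⟩
  | (m+1) => ⟨Fw m, rfl⟩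

lemma Fw_prefix_s18 {m m' : ℕ} (h : m ≤ m') : Fw m <+: Fw m' := by
  induction m' with
  | zero => simp_all
  | succ k ihk =>
    rcases Nat.lt_or_ge m (k+1) with h' | h'
    · exact (ihk (by omega)).trans (Fw_prefix_succ k)
    · have : m = k + 1 := by omega
      subst this; rfl

lemma prefix_getD {l1 l2 : List Bool} (h : l1 <+: l2) {i : ℕ} (hi : i < l1.length) :
    l2.getD i false = l1.getD i false := by
  obtain ⟨t, rfl⟩ := h
  exact List.getD_append _ _ _ _ hi

lemma fibWord_getD {m i : ℕ} (hi : i < (Fw m).length) : fibWord i = (Fw m).getD i false := by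
  unfold fibWord
  rcases le_total (i+1) m with h | h
  · exact (prefix_getD (Fw_prefix_s18 h) (by have := Fw_len (i+1); omega)).symm
  · exact (prefix_getD (Fw_prefix_s18 h) hi)

def s : ℕ → ℕ
  | 0 => 0
  | k+1 => s k + (if fibWord k then 1 else 2)

@[simp] lemma s_zero : s 0 = 0 := rfl
lemma s_succ (k : ℕ) : s (k+1) = s k + (if fibWord k then 1 else 2) := rfl

lemma sigL_take (l : List Bool) : ∀ j, j ≤ l.length → (∀ i, i < j → l.getD i false = fibWord i) →
    (sigL (l.take j)).length = s j := by
  intro j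
  induction j with
  | zero => intro _ _; simp [sigL]
  | succ j ih =>
    intro hj hfib
    have hjl : j < l.length := by omega
    have ht : l.take (j+1) = l.take j ++ [l.getD j false] := by
      rw [List.take_succ]
      congr 1
      rw [List.getElem?_eq_getElem hjl, List.getD_eq_getElem _ _ hjl]
      rfl
    rw [ht, sigL_append, List.length_append, ih (by omega) (fun i hi => hfib i (by omega)),
      hfib j (by omega), s_succ]
    cases fibWord j <;> simp [sigL]

lemma fib_block (k : ℕ) : fibWord (s k) = false ∧ fibWord (s k + 1) = !fibWord k := by
  set l := Fw (k+2) with hl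
  have hlen : k + 3 ≤ l.length := Fw_len (k+2)
  have hfib : ∀ i, i < l.length → l.getD i false = fibWord i :=
    fun i hi => (fibWord_getD hi).symm
  have hs : (sigL (l.take k)).length = s k := sigL_take l k (by omega) (fun i hi => hfib i (by omega))
  have hk1 : k < l.length := by omega
  have hk2 : k + 1 < l.length := by omega
  have hdec : Fw (k+3) = sigL (l.take k) ++
      ((if fibWord k then [false] else [false, true]) ++
       ((if l.getD (k+1) false then [false] else [false, true]) ++ sigL (l.drop (k+2)))) := by
    rw [Fw_succ (k+2), ← hl]
    conv_lhs => rw [← List.take_append_drop k l]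
    rw [List.drop_eq_getElem_cons hk1, show k + 1 = k + 1 from rfl,
      List.drop_eq_getElem_cons (by omega : k + 1 < l.length)]
    rw [sigL_append, sigL_cons, sigL_cons]
    rw [← List.getD_eq_getElem l false hk1, ← List.getD_eq_getElem l false hk2, hfib k hk1]
  -- lengths
  have hblen : ∀ x : Bool, 1 ≤ (if x then [false] else [false, true] : List Bool).length := by
    intro x; cases x <;> simp
  have hlen3 : s k + 2 ≤ (Fw (k+3)).length := by
    rw [hdec]
    simp only [List.length_append, hs]
    have := hblen (fibWord k); have := hblen (l.getD (k+1) false); omega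
  have e0 : fibWord (s k) = (Fw (k+3)).getD (s k) false := fibWord_getD (by omega)
  have e1 : fibWord (s k + 1) = (Fw (k+3)).getD (s k + 1) false := fibWord_getD (by omega)
  constructor
  · rw [e0, hdec, List.getD_append_right _ _ _ _ hs.le, hs, Nat.sub_self]
    cases hfk : fibWord k <;> simp
  · rw [e1, hdec, List.getD_append_right _ _ _ _ (by rw [hs]; omega), hs,
      show s k + 1 - s k = 1 by omega]
    cases hfk : fibWord k <;> cases hb : l.getD (k+1) false <;> simp

lemma s_lt_succ (k : ℕ) : s k < s (k+1) := by
  rw [s_succ]; cases fibWord k <;> simp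

lemma s_mono {k k' : ℕ} (h : k ≤ k') : s k ≤ s k' := by
  induction k' with
  | zero => simp_all
  | succ j ih =>
    rcases Nat.lt_or_ge k (j+1) with h' | h'
    · exact le_trans (ih (by omega)) (s_lt_succ j).le
    · have : k = j + 1 := by omega
      subst this; rfl

lemma s_strict_mono {k k' : ℕ} (h : k < k') : s k < s k' :=
  lt_of_lt_of_le (s_lt_succ k) (s_mono h)

lemma exists_block (p : ℕ) : ∃ k, s k = p ∨ (s k + 1 = p ∧ fibWord p = true) := by
  induction p with
  | zero => exact ⟨0, Or.inl rfl⟩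
  | succ p ih =>
    obtain ⟨k, hk | ⟨hk, hp⟩⟩ := ih
    · cases hf : fibWord k with
      | true => exact ⟨k+1, Or.inl (by rw [s_succ, hf, hk]; simp)⟩
      | false =>
        refine ⟨k, Or.inr ⟨by omega, ?_⟩⟩
        have := (fib_block k).2
        rw [hk, hf] at this
        simpa using this
    · have hfk : fibWord k = false := by
        have := (fib_block k).2
        rw [hk, hp] at this
        cases h' : fibWord k <;> simp [h'] at this ⊢
      exact ⟨k+1, Or.inl (by rw [s_succ, hfk]; simp; omega)⟩

lemma noBB {p : ℕ} (h : fibWord p = true) : fibWord (p+1) = false := by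
  obtain ⟨k, hk | ⟨hk, _⟩⟩ := exists_block p
  · rw [← hk] at h; rw [(fib_block k).1] at h; exact absurd h (by simp)
  · have hfk : fibWord k = false := by
      have := (fib_block k).2
      rw [hk, h] at this
      cases h' : fibWord k <;> simp [h'] at this ⊢
    have : s (k+1) = p + 1 := by rw [s_succ, hfk]; simp; omega
    rw [← this]; exact (fib_block (k+1)).1

lemma boundary {p : ℕ} (h : fibWord p = false) : ∃ k, s k = p := by
  obtain ⟨k, hk | ⟨_, hp⟩⟩ := exists_block p
  · exact ⟨k, hk⟩
  · rw [h] at hp; exact absurd hp (by simp)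

lemma s_two (k : ℕ) : s k + 3 ≤ s (k + 2) := by
  rw [show k + 2 = (k+1)+1 from rfl, s_succ, s_succ]
  cases hf : fibWord k with
  | false => cases fibWord (k+1) <;> simp
  | true => rw [noBB hf]; simp

lemma s_ge_succ {k : ℕ} (h : 1 ≤ k) : k + 1 ≤ s k := by
  induction k with
  | zero => omega
  | succ j ih =>
    rcases Nat.eq_or_lt_of_le h with h' | h'
    · have : j = 0 := by omega
      subst this
      rw [s_succ, fibWord_zero]; simp
    · have := ih (by omega)
      have := s_lt_succ j
      omega

lemma key : ∀ n, 1 ≤ n → (∀ i, i + 2 ≤ 2*n → fibWord i = fibWord (i+n)) → False := by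
  intro n
  induction n using Nat.strong_induction_on with
  | _ n ihn =>
  intro hn per
  rcases Nat.eq_or_lt_of_le hn with h1 | h1
  · have := per 0 (by omega)
    rw [← h1, fibWord_zero] at this
    simp [fibWord_one] at this
  -- n ≥ 2
  have hn2 : 2 ≤ n := h1
  have hfn : fibWord n = false := by
    have := per 0 (by omega)
    rw [fibWord_zero] at this
    simpa using this.symm
  obtain ⟨m, hm⟩ := boundary hfn
  have hm1 : 1 ≤ m := by
    rcases Nat.eq_zero_or_pos m with h | h
    · subst h; simp at hm; omega
    · exact h
  have hmn : m < n := by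
    have := s_ge_succ hm1
    omega
  have main : ∀ k, k ≤ 2*m - 2 → s (k + m) = s k + n ∧ fibWord (k + m) = fibWord k := by
    intro k
    induction k using Nat.strong_induction_on with
    | _ k ihk =>
    intro hk
    have hQ : s (k + m) = s k + n := by
      cases k with
      | zero => simpa using hm
      | succ j =>
        obtain ⟨q, e⟩ := ihk j (by omega) (by omega)
        rw [show j + 1 + m = (j + m) + 1 by omega, s_succ, s_succ, q, e]
        omega
    have hbound : s k + 3 ≤ 2 * n := by
      rcases Nat.lt_or_ge k m with h | h
      · have := s_strict_mono h
        omega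
      · have h2m : s (m + m) = 2 * n := by
          rcases Nat.eq_or_lt_of_le h with h' | h'
          · subst h'
            rw [hQ, hm]; omega
          · rw [(ihk m h' (by omega)).1, hm]; omega
        have hst := s_two k
        have hsm := s_mono (show k + 2 ≤ m + m by omega)
        omega
    refine ⟨hQ, ?_⟩
    have b1 := (fib_block (k+m)).2
    have b2 := (fib_block k).2
    have hper := per (s k + 1) (by omega)
    rw [hQ, show s k + n + 1 = s k + 1 + n by omega, ← hper, b2] at b1
    exact (Bool.not_inj b1).symm
  refine ihn m hmn hm1 ?_
  intro i hi
  exact ((main i (by omega)).2).symm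

/-- No prefix of the Fibonacci word is a cube. -/
theorem no_cube_prefix :
    ¬∃ w : List Bool, w ≠ [] ∧ fFactor 1 (3 * w.length) = w ++ w ++ w := by
  rintro ⟨w, hw, h⟩
  set n := w.length with hn
  have hn1 : 1 ≤ n := List.length_pos_iff.mpr hw
  have g : ∀ j, j < 3*n → fibWord j = (w ++ w ++ w).getD j false := by
    intro j hj
    rw [← h]
    unfold fFactor
    rw [List.getD_eq_getElem _ _ (by simpa using hj)]
    simp
  have per : ∀ i, i + 2 ≤ 2*n → fibWord i = fibWord (i+n) := by
    intro i hi
    rw [g i (by omega), g (i+n) (by omega)]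
    have l1 : (w ++ w ++ w).getD i false = (w ++ w).getD i false :=
      List.getD_append _ _ _ _ (by simp [← hn]; omega)
    have l2 : (w ++ w ++ w).getD (i+n) false = (w ++ w).getD i false := by
      rw [List.append_assoc, List.getD_append_right _ _ _ _ (by omega),
        show i + n - w.length = i by omega]
    rw [l1, l2]
  exact key n hn1 per
end
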